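/- Let A be a unital C*-algebra and let (𝒟, π) be a representation of A (viewed as a unital *-algebra) on a complex Hilbert space H. Then ‖π(a)ξ‖ ≤ ‖a‖·‖ξ‖ for every a ∈ A and every ξ ∈ 𝒟; that is, every representation of a unital C*-algebra by possibly unbounded operators is automatically norm-bounded. Consequently, if the representation is closed, then 𝒟 = H and π extends to a unital *-homomorphism from A into the C*-algebra B(H) of bounded operators on H. -/

import Mathlib

/-! In a C⋆-algebra `‖a‖² • 1 - a⋆a` is positive, hence of the form `b⋆b`, and applying the
representation gives `‖a‖² ‖ξ‖² - ‖π a ξ‖² = ‖π b ξ‖² ≥ 0`. Each `π a` is therefore bounded and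
extends by continuity to all of `H`; by density of the domain these extensions form a
`⋆`-homomorphism into `B(H)`, and the closure of `π a` contains the graph of its extension, so it
is everywhere defined. -/

/-- A representation of a unital `⋆`-algebra `A` on a complex Hilbert space `H`:
a dense subspace `dom ⊆ H` together with a unital algebra homomorphism `π` from `A` into the
endomorphisms of `dom` satisfying `⟪π a ξ, η⟫ = ⟪ξ, π (star a) η⟫`. -/
structure HilbertRep (A : Type*) [Ring A] [Algebra ℂ A] [StarRing A] [StarModule ℂ A]
    (H : Type*) [NormedAddCommGroup H] [InnerProductSpace ℂ H] where
  dom : Submodule ℂ H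
  dense : Dense (dom : Set H)
  π : A → (dom →ₗ[ℂ] dom)
  π_one : π 1 = LinearMap.id
  π_mul : ∀ a b : A, π (a * b) = (π a).comp (π b)
  π_add : ∀ a b : A, π (a + b) = π a + π b
  π_smul : ∀ (c : ℂ) (a : A), π (c • a) = c • π a
  π_star : ∀ (a : A) (ξ η : dom),
    (inner ℂ ((π a ξ : dom) : H) (η : H) : ℂ) = inner ℂ (ξ : H) ((π (star a) η : dom) : H)

variable {A : Type*} [NormedRing A] [StarRing A] [CStarRing A] [NormedAlgebra ℂ A]
  [CompleteSpace A] [StarModule ℂ A]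
variable {H : Type*} [NormedAddCommGroup H] [InnerProductSpace ℂ H] [CompleteSpace H]

/-- The operator `π a` of a representation, as a partially defined (unbounded) linear
operator on `H`. -/
def HilbertRep.op (ρ : HilbertRep A H) (a : A) : H →ₗ.[ℂ] H :=
  ⟨ρ.dom, ρ.dom.subtype.comp (ρ.π a)⟩

/-- A representation is *closed* if its domain is the intersection of the domains of the
closures of all the operators `π a`. -/
def HilbertRep.IsClosedRep (ρ : HilbertRep A H) : Prop :=
  (ρ.dom : Set H) = ⋂ a : A, ((ρ.op a).closure.domain : Set H)

theorem LinearPMap.closure_domain_eq_top_of_eq_continuous {𝕜 E F : Type*} [RCLike 𝕜]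
    [NormedAddCommGroup E] [NormedSpace 𝕜 E] [NormedAddCommGroup F] [NormedSpace 𝕜 F]
    {T : E →ₗ.[𝕜] F} (f : E →L[𝕜] F) (hT : Dense (T.domain : Set E))
    (hf : ∀ x : T.domain, T x = f x) : T.closure.domain = ⊤ := by
  have hgraph : ∀ x : T.domain, ((x : E), f x) ∈ T.graph := fun x => hf x ▸ T.mem_graph x
  have hclosable : T.IsClosable := by
    refine LinearPMap.isClosable_iff_exists_closed_extension.mpr
      ⟨(f : E →ₗ[𝕜] F).toPMap ⊤, ?_, le_top, fun x y hxy => by simp [hf, hxy]; rfl⟩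
    have graph_eq : (((f : E →ₗ[𝕜] F).toPMap ⊤).graph : Set (E × F)) = {p | f p.1 = p.2} := by
      ext ⟨x, y⟩
      simp [LinearPMap.mem_graph_iff]
    rw [LinearPMap.IsClosed, graph_eq]
    exact isClosed_eq (f.continuous.comp continuous_fst) continuous_snd
  refine eq_top_iff.mpr fun x _ => LinearPMap.mem_domain_of_mem_graph (y := f x) ?_
  rw [← hclosable.graph_closure_eq_closure_graph, ← SetLike.mem_coe,
    Submodule.topologicalClosure_coe]
  exact map_mem_closure (f := fun y => (y, f y)) (by fun_prop) (hT.closure_eq ▸ Set.mem_univ x)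
    fun y hy => hgraph ⟨y, hy⟩

namespace HilbertRep

section StarAlgebra

variable {B : Type*} [Ring B] [Algebra ℂ B] [StarRing B] [StarModule ℂ B]
  {E : Type*} [NormedAddCommGroup E] [InnerProductSpace ℂ E] (ρ : HilbertRep B E)

def IsBoundedRep : Prop :=
  ∀ a, ∃ C, ∀ ξ : ρ.dom, ‖(ρ.π a ξ : E)‖ ≤ C * ‖(ξ : E)‖

def toAlgHom : B →ₐ[ℂ] Module.End ℂ ρ.dom where
  toFun := ρ.π
  map_one' := ρ.π_one
  map_mul' := ρ.π_mul
  map_zero' := by simpa using ρ.π_smul 0 0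
  map_add' := ρ.π_add
  commutes' c := by
    rw [Algebra.algebraMap_eq_smul_one, ρ.π_smul, ρ.π_one]
    rfl

theorem toAlgHom_apply (a : B) : ρ.toAlgHom a = ρ.π a := rfl

theorem re_inner_π_star_mul_self (b : B) (ξ : ρ.dom) :
    RCLike.re (inner ℂ (ξ : E) (ρ.π (star b * b) ξ : E)) = ‖(ρ.π b ξ : E)‖ ^ 2 := by
  rw [ρ.π_mul, LinearMap.comp_apply, ← ρ.π_star, inner_self_eq_norm_sq]

theorem continuousLinearMap_ext {F G : E →L[ℂ] E} (h : ∀ ξ : ρ.dom, F ξ = G ξ) : F = G :=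
  ContinuousLinearMap.ext_on (by rw [Submodule.span_eq]; exact ρ.dense) fun x hx => h ⟨x, hx⟩

end StarAlgebra

theorem norm_π_apply_le {E : Type*} [NormedAddCommGroup E] [InnerProductSpace ℂ E]
    (ρ : HilbertRep A E) (a : A) (ξ : ρ.dom) :
    ‖(ρ.π a ξ : E)‖ ≤ ‖a‖ * ‖(ξ : E)‖ := by
  let _ : CStarAlgebra A := {}
  -- the spectral order of a C⋆-algebra is not a global instance
  let _ := CStarAlgebra.spectralOrder A
  have _ := CStarAlgebra.spectralOrderedRing A
  obtain ⟨b, hb⟩ := CStarAlgebra.nonneg_iff_eq_star_mul_self.mp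
    (sub_nonneg.mpr (CStarAlgebra.star_mul_le_algebraMap_norm_sq (a := a)))
  have key : ‖a‖ ^ 2 * ‖(ξ : E)‖ ^ 2 - ‖(ρ.π a ξ : E)‖ ^ 2 = ‖(ρ.π b ξ : E)‖ ^ 2 := by
    have h := ρ.re_inner_π_star_mul_self b ξ
    rwa [← hb, ← ρ.toAlgHom_apply, map_sub, AlgHom.map_algebraMap, LinearMap.sub_apply,
      Module.algebraMap_end_apply, toAlgHom_apply, Submodule.coe_sub,
      Submodule.coe_smul_of_tower, inner_sub_right, inner_smul_right_eq_smul, map_sub,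
      RCLike.smul_re, inner_self_eq_norm_sq, re_inner_π_star_mul_self] at h
  have hsq : ‖(ρ.π a ξ : E)‖ ^ 2 ≤ (‖a‖ * ‖(ξ : E)‖) ^ 2 := by
    rw [mul_pow]; linarith [sq_nonneg ‖(ρ.π b ξ : E)‖]
  exact (pow_le_pow_iff_left₀ (norm_nonneg _) (by positivity) two_ne_zero).mp hsq

theorem isBoundedRep {E : Type*} [NormedAddCommGroup E] [InnerProductSpace ℂ E]
    (ρ : HilbertRep A E) : ρ.IsBoundedRep :=
  fun a => ⟨‖a‖, ρ.norm_π_apply_le a⟩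

section Extension

variable {B : Type*} [Ring B] [Algebra ℂ B] [StarRing B] [StarModule ℂ B]
  {E : Type*} [NormedAddCommGroup E] [InnerProductSpace ℂ E] [CompleteSpace E]
  (ρ : HilbertRep B E)

noncomputable def extension (a : B) : E →L[ℂ] E :=
  (ρ.dom.subtype ∘ₗ ρ.π a).extendOfNorm ρ.dom.subtype

variable {ρ}

theorem extension_apply (hρ : ρ.IsBoundedRep) (a : B) (ξ : ρ.dom) :
    ρ.extension a ξ = ρ.π a ξ :=
  LinearMap.extendOfNorm_eq ρ.dense.denseRange_val (hρ a) ξ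

theorem extension_star (hρ : ρ.IsBoundedRep) (a : B) :
    ρ.extension (star a) = star (ρ.extension a) := by
  refine ρ.continuousLinearMap_ext fun ξ => ρ.dense.eq_of_inner_right ℂ fun v hv => ?_
  rw [ContinuousLinearMap.star_eq_adjoint, ContinuousLinearMap.adjoint_inner_right,
    extension_apply hρ, extension_apply hρ a ⟨v, hv⟩, ρ.π_star]

noncomputable def toStarAlgHom (hρ : ρ.IsBoundedRep) : B →⋆ₐ[ℂ] (E →L[ℂ] E) where
  toFun := ρ.extension
  map_one' := ρ.continuousLinearMap_ext fun ξ => by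
    rw [extension_apply hρ, ρ.π_one]; rfl
  map_mul' a b := ρ.continuousLinearMap_ext fun ξ => by
    rw [mul_apply_eq_comp, extension_apply hρ, extension_apply hρ b,
      extension_apply hρ a, ρ.π_mul]; rfl
  map_zero' := ρ.continuousLinearMap_ext fun ξ => by
    rw [extension_apply hρ, ← toAlgHom_apply, map_zero]; rfl
  map_add' a b := ρ.continuousLinearMap_ext fun ξ => by
    rw [add_apply, extension_apply hρ, extension_apply hρ,
      extension_apply hρ, ρ.π_add]; rfl
  commutes' c := ρ.continuousLinearMap_ext fun ξ => by
    rw [extension_apply hρ, ← toAlgHom_apply, AlgHom.commutes]; rfl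
  map_star' := extension_star hρ

end Extension

theorem closure_op_domain_eq_top (ρ : HilbertRep A H) (a : A) : (ρ.op a).closure.domain = ⊤ :=
  LinearPMap.closure_domain_eq_top_of_eq_continuous (ρ.extension a) ρ.dense
    fun ξ => (extension_apply ρ.isBoundedRep a ξ).symm

theorem IsClosedRep.dom_eq_top {ρ : HilbertRep A H} (hρ : ρ.IsClosedRep) : ρ.dom = ⊤ :=
  SetLike.coe_injective <| hρ.trans <| by simp [closure_op_domain_eq_top]

end HilbertRep

theorem cstar_rep_bounded (ρ : HilbertRep A H) :
    (∀ (a : A) (ξ : ρ.dom), ‖((ρ.π a ξ : ρ.dom) : H)‖ ≤ ‖a‖ * ‖(ξ : H)‖) ∧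
    (ρ.IsClosedRep → ρ.dom = ⊤ ∧
      ∃ Φ : A →⋆ₐ[ℂ] (H →L[ℂ] H), ∀ (a : A) (ξ : ρ.dom),
        Φ a (ξ : H) = ((ρ.π a ξ : ρ.dom) : H)) :=
  ⟨ρ.norm_π_apply_le, fun hρ =>
    ⟨hρ.dom_eq_top, ρ.toStarAlgHom ρ.isBoundedRep,
      HilbertRep.extension_apply ρ.isBoundedRep⟩⟩
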